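/- Let Ω ⊆ ℝ² be a bounded fully symmetric measurable set of positive measure and w a nonnegative measurable function on √Ω such that for each sign pair ε = (ε₁,ε₂) ∈ {−1/2, 1/2}² the weight w_ε(s,t) = s^{ε₁} t^{ε₂} w(s,t) has finite positive integral over √Ω. For each ε, let {P^ε_α}_{α ∈ A_ε} be a family of measurable functions on √Ω that is orthonormal with respect to the inner product ⟨f,g⟩_ε = b(w_ε) ∫_{√Ω} f g w_ε ds dt. Define on Ω the functions P^{EE}_α(u,v) = P^{(−1/2,−1/2)}_α(u²,v²); P^{OO}_α(u,v) = sqrt(b(w_{(1/2,1/2)})/b_W) · u v · P^{(1/2,1/2)}_α(u²,v²); P^{EO}_α(u,v) = sqrt(b(w_{(−1/2,1/2)})/b_W) · v · P^{(−1/2,1/2)}_α(u²,v²); and P^{OE}_α(u,v) = sqrt(b(w_{(1/2,−1/2)})/b_W) · u · P^{(1/2,−1/2)}_α(u²,v²). Then the combined family of all these functions is an orthonormal system with respect to the inner product ⟨F,G⟩_W = b_W ∫_Ω F G W du dv: within each of the four families the functions are orthonormal, and any two functions taken from two different families are orthogonal. -/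

import Mathlib

/-!
Each function of the combined family has a definite parity in `u` and in `v`, fixed by its
sign pair `ε`. Two functions from different families differ in parity in at least one variable,
so the reflection in that variable maps their product `F G W` to its negative, and the integral
over the symmetric set `Ω` vanishes. Within one family the integrand is even in both variables,
so its integral over `Ω` is four times the integral over the first quadrant; there the
substitution `(s, t) = (u², v²)` has Jacobian `4uv`, which together with the factor
`s^{±1/2} t^{±1/2}` of `w_ε` leaves exactly the square of the parity monomial `u^{0|1} v^{0|1}`
of `F` and `G`. This turns `⟨F, G⟩_W` into `⟨P, P'⟩_ε` up to the constants, and the case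
`ε = (-1/2, -1/2)`, `F = G = 1` shows `b_W = b(w_{(-1/2,-1/2)})`.
-/

open MeasureTheory
open scoped Classical

noncomputable section

section Reflection

variable {α : Type*} [MeasurableSpace α] {μ : Measure α} {σ : α → α} {S T : Set α} {H : α → ℝ}

theorem setIntegral_eq_zero_of_comp_eq_neg (hσ : MeasurePreserving σ μ μ)
    (hσe : MeasurableEmbedding σ) (hS : σ ⁻¹' S = S) (hH : ∀ x, H (σ x) = -H x) :
    ∫ x in S, H x ∂μ = 0 := by
  have h := hσ.setIntegral_preimage_emb hσe H S
  simp only [hS, hH, integral_neg] at h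
  linarith

theorem integrableOn_and_setIntegral_eq_two_mul_of_comp_eq (hσ : MeasurePreserving σ μ μ)
    (hσe : MeasurableEmbedding σ) (hT : MeasurableSet T) (hS : σ ⁻¹' S = S)
    (hcover : Tᶜ ⊆ σ ⁻¹' T) (hnull : μ (T ∩ σ ⁻¹' T) = 0) (hH : ∀ x, H (σ x) = H x)
    (hint : IntegrableOn H (S ∩ T) μ) :
    IntegrableOn H S μ ∧ ∫ x in S, H x ∂μ = 2 * ∫ x in S ∩ T, H x ∂μ := by
  have hpre : σ ⁻¹' (S ∩ T) = S ∩ σ ⁻¹' T := by rw [Set.preimage_inter, hS]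
  have hint' : IntegrableOn H (S ∩ σ ⁻¹' T) μ := by
    rw [← hpre, ← funext hH]
    exact (hσ.integrableOn_comp_preimage hσe).2 hint
  have hdiff : S \ T ⊆ S ∩ σ ⁻¹' T := fun x hx => ⟨hx.1, hcover hx.2⟩
  have hintS : IntegrableOn H S μ := by
    rw [← Set.inter_union_sdiff S T]
    exact hint.union (hint'.mono_set hdiff)
  have hae : (S \ T : Set α) =ᵐ[μ] (S ∩ σ ⁻¹' T : Set α) := by
    refine ae_eq_set.2 ⟨by simp [Set.sdiff_eq_empty.2 hdiff], measure_mono_null ?_ hnull⟩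
    rintro x ⟨⟨hxS, hx⟩, hx'⟩
    exact ⟨not_not.1 fun h => hx' ⟨hxS, h⟩, hx⟩
  have hreflect : ∫ x in S \ T, H x ∂μ = ∫ x in S ∩ T, H x ∂μ := by
    rw [setIntegral_congr_set hae, ← hpre, ← hσ.setIntegral_preimage_emb hσe H (S ∩ T)]
    simp only [hH]
  refine ⟨hintS, ?_⟩
  rw [← integral_inter_add_sdiff hT hintS, hreflect, two_mul]

end Reflection

theorem IntegrableOn.mul_mul_of_mul_self {α : Type*} [MeasurableSpace α] {μ : Measure α}
    {s : Set α} (hs : MeasurableSet s) {f g w : α → ℝ} (hf : Measurable f) (hg : Measurable g)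
    (hw : Measurable w) (hw₀ : ∀ x ∈ s, 0 ≤ w x)
    (hff : IntegrableOn (fun x => f x * f x * w x) s μ)
    (hgg : IntegrableOn (fun x => g x * g x * w x) s μ) :
    IntegrableOn (fun x => f x * g x * w x) s μ := by
  refine (hff.add hgg).mono' ((hf.mul hg).mul hw).aestronglyMeasurable ?_
  filter_upwards [ae_restrict_mem hs] with x hx
  rw [Pi.add_apply, Real.norm_eq_abs, abs_mul, abs_of_nonneg (hw₀ x hx), ← add_mul, abs_mul]
  refine mul_le_mul_of_nonneg_right ?_ (hw₀ x hx)
  nlinarith [abs_mul_abs_self (f x), abs_mul_abs_self (g x), abs_nonneg (f x), abs_nonneg (g x)]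

namespace FullySymmetric

def sqMap (p : ℝ × ℝ) : ℝ × ℝ := (p.1 ^ 2, p.2 ^ 2)

@[simp] theorem sqMap_neg_fst (p : ℝ × ℝ) : sqMap (-p.1, p.2) = sqMap p := by simp [sqMap]

@[simp] theorem sqMap_neg_snd (p : ℝ × ℝ) : sqMap (p.1, -p.2) = sqMap p := by simp [sqMap]

def reflFst : ℝ × ℝ ≃ᵐ ℝ × ℝ := (MeasurableEquiv.neg ℝ).prodCongr (MeasurableEquiv.refl ℝ)

def reflSnd : ℝ × ℝ ≃ᵐ ℝ × ℝ := (MeasurableEquiv.refl ℝ).prodCongr (MeasurableEquiv.neg ℝ)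

@[simp] theorem reflFst_apply (p : ℝ × ℝ) : reflFst p = (-p.1, p.2) := rfl

@[simp] theorem reflSnd_apply (p : ℝ × ℝ) : reflSnd p = (p.1, -p.2) := rfl

theorem measurePreserving_reflFst : MeasurePreserving reflFst volume volume := by
  rw [Measure.volume_eq_prod]
  exact (Measure.measurePreserving_neg volume).prod (MeasurePreserving.id volume)

theorem measurePreserving_reflSnd : MeasurePreserving reflSnd volume volume := by
  rw [Measure.volume_eq_prod]
  exact (MeasurePreserving.id volume).prod (Measure.measurePreserving_neg volume)

theorem preimage_reflFst_eq {S : Set (ℝ × ℝ)} (hS : ∀ p ∈ S, (-p.1, p.2) ∈ S) :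
    reflFst ⁻¹' S = S :=
  Set.ext fun p => ⟨fun h => by simpa using hS _ h, hS p⟩

theorem preimage_reflSnd_eq {S : Set (ℝ × ℝ)} (hS : ∀ p ∈ S, (p.1, -p.2) ∈ S) :
    reflSnd ⁻¹' S = S :=
  Set.ext fun p => ⟨fun h => by simpa using hS _ h, hS p⟩

theorem ae_fst_ne_zero : ∀ᵐ p : ℝ × ℝ, p.1 ≠ 0 := by
  rw [Measure.volume_eq_prod]
  exact Measure.quasiMeasurePreserving_fst.ae (volume.ae_ne 0)

theorem ae_snd_ne_zero : ∀ᵐ p : ℝ × ℝ, p.2 ≠ 0 := by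
  rw [Measure.volume_eq_prod]
  exact Measure.quasiMeasurePreserving_snd.ae (volume.ae_ne 0)

theorem measurableSet_quadrant : MeasurableSet {p : ℝ × ℝ | 0 ≤ p.1 ∧ 0 ≤ p.2} :=
  (measurableSet_le measurable_const measurable_fst).inter
    (measurableSet_le measurable_const measurable_snd)

theorem setIntegral_eq_four_mul_setIntegral_quadrant {S : Set (ℝ × ℝ)} {H : ℝ × ℝ → ℝ}
    (hS₁ : ∀ p ∈ S, (-p.1, p.2) ∈ S) (hS₂ : ∀ p ∈ S, (p.1, -p.2) ∈ S)
    (hH₁ : ∀ p : ℝ × ℝ, H (-p.1, p.2) = H p) (hH₂ : ∀ p : ℝ × ℝ, H (p.1, -p.2) = H p)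
    (hint : IntegrableOn H (S ∩ {p | 0 ≤ p.1 ∧ 0 ≤ p.2})) :
    ∫ p in S, H p = 4 * ∫ p in S ∩ {p | 0 ≤ p.1 ∧ 0 ≤ p.2}, H p := by
  set S₁ := S ∩ {p : ℝ × ℝ | 0 ≤ p.1}
  have hquadrant : S ∩ {p : ℝ × ℝ | 0 ≤ p.1 ∧ 0 ≤ p.2} = S₁ ∩ {p | 0 ≤ p.2} := by
    rw [Set.ofPred_and, Set.inter_assoc]
  have hS₁₂ : ∀ p ∈ S₁, (p.1, -p.2) ∈ S₁ := fun p hp => ⟨hS₂ p hp.1, hp.2⟩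
  rw [hquadrant] at hint ⊢
  obtain ⟨hint₁, h₂⟩ := integrableOn_and_setIntegral_eq_two_mul_of_comp_eq
    measurePreserving_reflSnd reflSnd.measurableEmbedding
    (measurableSet_le measurable_const measurable_snd) (preimage_reflSnd_eq hS₁₂)
    (fun p (hp : ¬0 ≤ p.2) => neg_nonneg.2 (not_le.1 hp).le)
    (measure_mono_null (fun p hp => not_not.2 (le_antisymm (neg_nonneg.1 hp.2) hp.1))
      (ae_iff.1 ae_snd_ne_zero)) hH₂ hint
  obtain ⟨-, h₁⟩ := integrableOn_and_setIntegral_eq_two_mul_of_comp_eq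
    measurePreserving_reflFst reflFst.measurableEmbedding
    (measurableSet_le measurable_const measurable_fst) (preimage_reflFst_eq hS₁)
    (fun p (hp : ¬0 ≤ p.1) => neg_nonneg.2 (not_le.1 hp).le)
    (measure_mono_null (fun p hp => not_not.2 (le_antisymm (neg_nonneg.1 hp.2) hp.1))
      (ae_iff.1 ae_fst_ne_zero)) hH₁ hint₁
  rw [h₁, h₂]
  ring

def sqMapDeriv (p : ℝ × ℝ) : ℝ × ℝ →L[ℝ] ℝ × ℝ :=
  (ContinuousLinearMap.smulRight (1 : ℝ →L[ℝ] ℝ) (2 * p.1)).prodMap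
    (ContinuousLinearMap.smulRight (1 : ℝ →L[ℝ] ℝ) (2 * p.2))

theorem hasFDerivAt_sqMap (p : ℝ × ℝ) : HasFDerivAt sqMap (sqMapDeriv p) p := by
  exact HasFDerivAt.prodMap (p := p) (by simpa using (hasDerivAt_pow 2 p.1).hasFDerivAt)
    (by simpa using (hasDerivAt_pow 2 p.2).hasFDerivAt)

theorem abs_det_sqMapDeriv {p : ℝ × ℝ} (hp : 0 ≤ p.1 ∧ 0 ≤ p.2) :
    |(sqMapDeriv p).det| = 4 * (p.1 * p.2) := by
  rw [sqMapDeriv, ContinuousLinearMap.det, ContinuousLinearMap.coe_prodMap,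
    LinearMap.det_prodMap]
  simp only [LinearMap.det_ring, ContinuousLinearMap.coe_coe,
    ContinuousLinearMap.smulRight_apply, one_apply_eq_self, one_smul]
  rw [abs_of_nonneg (by nlinarith)]
  ring

theorem injOn_sqMap : Set.InjOn sqMap {p : ℝ × ℝ | 0 ≤ p.1 ∧ 0 ≤ p.2} := by
  rintro p ⟨hp₁, hp₂⟩ q ⟨hq₁, hq₂⟩ h
  simp only [sqMap, Prod.mk.injEq] at h
  exact Prod.ext ((sq_eq_sq₀ hp₁ hq₁).1 h.1) ((sq_eq_sq₀ hp₂ hq₂).1 h.2)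

def halfExp (b : Bool) : ℝ := if b then 1 / 2 else -(1 / 2)

def halfWeight (w : ℝ × ℝ → ℝ) (ε : Bool × Bool) (q : ℝ × ℝ) : ℝ :=
  q.1 ^ halfExp ε.1 * q.2 ^ halfExp ε.2 * w q

def parityMonomial (ε : Bool × Bool) (p : ℝ × ℝ) : ℝ :=
  (if ε.1 then p.1 else 1) * (if ε.2 then p.2 else 1)

def parityLift (ε : Bool × Bool) (f : ℝ × ℝ → ℝ) (p : ℝ × ℝ) : ℝ :=
  parityMonomial ε p * f (sqMap p)

theorem measurable_halfWeight {w : ℝ × ℝ → ℝ} (hw : Measurable w) (ε : Bool × Bool) :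
    Measurable (halfWeight w ε) := by
  unfold halfWeight
  fun_prop

theorem halfWeight_nonneg {w : ℝ × ℝ → ℝ} (ε : Bool × Bool) {q : ℝ × ℝ} (hq₁ : 0 ≤ q.1)
    (hq₂ : 0 ≤ q.2) (hw : 0 ≤ w q) : 0 ≤ halfWeight w ε q :=
  mul_nonneg (mul_nonneg (Real.rpow_nonneg hq₁ _) (Real.rpow_nonneg hq₂ _)) hw

theorem mul_rpow_halfExp_sq (b : Bool) {x : ℝ} (hx : 0 < x) :
    x * (x ^ 2) ^ halfExp b = (if b then x else 1) ^ 2 := by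
  rw [← Real.rpow_natCast, ← Real.rpow_mul hx.le]
  cases b <;> norm_num [halfExp, Real.rpow_neg_one, hx.ne', sq]

theorem mul_mul_halfWeight_sqMap (w : ℝ × ℝ → ℝ) (ε : Bool × Bool) {p : ℝ × ℝ}
    (hp₁ : 0 < p.1) (hp₂ : 0 < p.2) :
    p.1 * p.2 * halfWeight w ε (sqMap p) = parityMonomial ε p ^ 2 * w (sqMap p) := by
  rw [parityMonomial, mul_pow, ← mul_rpow_halfExp_sq ε.1 hp₁, ← mul_rpow_halfExp_sq ε.2 hp₂]
  simp only [halfWeight, sqMap]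
  ring

theorem parityLift_neg_fst (ε : Bool × Bool) (f : ℝ × ℝ → ℝ) (p : ℝ × ℝ) :
    parityLift ε f (-p.1, p.2) = (if ε.1 then -1 else 1) * parityLift ε f p := by
  rcases ε with ⟨_ | _, _ | _⟩ <;> simp [parityLift, parityMonomial]

theorem parityLift_neg_snd (ε : Bool × Bool) (f : ℝ × ℝ → ℝ) (p : ℝ × ℝ) :
    parityLift ε f (p.1, -p.2) = (if ε.2 then -1 else 1) * parityLift ε f p := by
  rcases ε with ⟨_ | _, _ | _⟩ <;> simp [parityLift, parityMonomial]

section ChangeOfVariables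

variable {s : Set (ℝ × ℝ)} (hs : MeasurableSet s) (hs₀ : s ⊆ {p | 0 ≤ p.1 ∧ 0 ≤ p.2})
include hs hs₀

theorem measurableSet_image_sqMap : MeasurableSet (sqMap '' s) := by
  simpa [Set.range_domRestrict] using (measurableEmbedding_of_fderivWithin hs
    (fun p _ => (hasFDerivAt_sqMap p).hasFDerivWithinAt) (injOn_sqMap.mono hs₀)).measurableSet_range

theorem integral_image_sqMap (g : ℝ × ℝ → ℝ) :
    ∫ q in sqMap '' s, g q = ∫ p in s, 4 * (p.1 * p.2) * g (sqMap p) := by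
  rw [integral_image_eq_integral_abs_det_fderiv_smul volume hs
    (fun p _ => (hasFDerivAt_sqMap p).hasFDerivWithinAt) (injOn_sqMap.mono hs₀)]
  exact setIntegral_congr_fun hs fun p hp => by rw [abs_det_sqMapDeriv (hs₀ hp), smul_eq_mul]

theorem integrableOn_image_sqMap_iff (g : ℝ × ℝ → ℝ) :
    IntegrableOn g (sqMap '' s) ↔ IntegrableOn (fun p => 4 * (p.1 * p.2) * g (sqMap p)) s := by
  rw [integrableOn_image_iff_integrableOn_abs_det_fderiv_smul volume hs
    (fun p _ => (hasFDerivAt_sqMap p).hasFDerivWithinAt) (injOn_sqMap.mono hs₀)]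
  exact integrableOn_congr_fun (fun p hp => by rw [abs_det_sqMapDeriv (hs₀ hp), smul_eq_mul]) hs

variable (w : ℝ × ℝ → ℝ) (ε : Bool × Bool) (F : ℝ × ℝ → ℝ)

theorem ae_jacobian_mul_halfWeight_sqMap :
    ∀ᵐ p ∂volume.restrict s, 4 * (p.1 * p.2) * (F (sqMap p) * halfWeight w ε (sqMap p))
      = 4 * (parityMonomial ε p ^ 2 * F (sqMap p) * w (sqMap p)) := by
  filter_upwards [ae_restrict_mem hs, ae_restrict_of_ae ae_fst_ne_zero,
    ae_restrict_of_ae ae_snd_ne_zero] with p hp hp₁ hp₂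
  have h := mul_mul_halfWeight_sqMap w ε (lt_of_le_of_ne (hs₀ hp).1 hp₁.symm)
    (lt_of_le_of_ne (hs₀ hp).2 hp₂.symm)
  linear_combination 4 * F (sqMap p) * h

theorem setIntegral_image_sqMap_mul_halfWeight :
    ∫ q in sqMap '' s, F q * halfWeight w ε q
      = 4 * ∫ p in s, parityMonomial ε p ^ 2 * F (sqMap p) * w (sqMap p) := by
  rw [integral_image_sqMap hs hs₀, ← integral_const_mul]
  exact integral_congr_ae (ae_jacobian_mul_halfWeight_sqMap hs hs₀ w ε F)

theorem integrableOn_image_sqMap_mul_halfWeight_iff :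
    IntegrableOn (fun q => F q * halfWeight w ε q) (sqMap '' s)
      ↔ IntegrableOn (fun p => parityMonomial ε p ^ 2 * F (sqMap p) * w (sqMap p)) s := by
  rw [integrableOn_image_sqMap_iff hs hs₀, IntegrableOn,
    integrable_congr (ae_jacobian_mul_halfWeight_sqMap hs hs₀ w ε F)]
  exact integrable_const_mul_iff (isUnit_iff_ne_zero.2 four_ne_zero) _

end ChangeOfVariables

theorem integrableOn_mul_mul_halfWeight {s : Set (ℝ × ℝ)} (hs : MeasurableSet s)
    (hs₀ : s ⊆ {p | 0 ≤ p.1 ∧ 0 ≤ p.2}) {w : ℝ × ℝ → ℝ} (hw : Measurable w)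
    (hw₀ : ∀ q ∈ sqMap '' s, 0 ≤ w q) (ε : Bool × Bool) {f g : ℝ × ℝ → ℝ}
    (hf : Measurable f) (hg : Measurable g)
    (hff : IntegrableOn (fun q => f q * f q * halfWeight w ε q) (sqMap '' s))
    (hgg : IntegrableOn (fun q => g q * g q * halfWeight w ε q) (sqMap '' s)) :
    IntegrableOn (fun q => f q * g q * halfWeight w ε q) (sqMap '' s) := by
  refine IntegrableOn.mul_mul_of_mul_self (measurableSet_image_sqMap hs hs₀) hf hg
    (measurable_halfWeight hw ε) ?_ hff hgg
  rintro _ ⟨p, hp, rfl⟩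
  exact halfWeight_nonneg ε (sq_nonneg _) (sq_nonneg _) (hw₀ _ ⟨p, hp, rfl⟩)

section Lift

variable {S : Set (ℝ × ℝ)} (hS₁ : ∀ p ∈ S, (-p.1, p.2) ∈ S) (hS₂ : ∀ p ∈ S, (p.1, -p.2) ∈ S)
  (w : ℝ × ℝ → ℝ)
include hS₁ hS₂

theorem setIntegral_parityLift_mul_parityLift_of_ne (f g : ℝ × ℝ → ℝ) {ε ε' : Bool × Bool}
    (h : ε ≠ ε') : ∫ p in S, parityLift ε f p * parityLift ε' g p * w (sqMap p) = 0 := by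
  obtain ⟨a, b⟩ := ε
  obtain ⟨a', b'⟩ := ε'
  by_cases ha : a = a'
  · have hb : b ≠ b' := fun hb => h (by rw [ha, hb])
    refine setIntegral_eq_zero_of_comp_eq_neg measurePreserving_reflSnd
      reflSnd.measurableEmbedding (preimage_reflSnd_eq hS₂) fun p => ?_
    simp only [reflSnd_apply, parityLift_neg_snd, sqMap_neg_snd]
    cases b <;> cases b' <;> simp at hb ⊢
  · refine setIntegral_eq_zero_of_comp_eq_neg measurePreserving_reflFst
      reflFst.measurableEmbedding (preimage_reflFst_eq hS₁) fun p => ?_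
    simp only [reflFst_apply, parityLift_neg_fst, sqMap_neg_fst]
    cases a <;> cases a' <;> simp at ha ⊢

variable (hS : MeasurableSet S)
include hS

theorem setIntegral_parityLift_mul_parityLift_self (f g : ℝ × ℝ → ℝ) (ε : Bool × Bool)
    (hfg : IntegrableOn (fun q => f q * g q * halfWeight w ε q)
      (sqMap '' (S ∩ {p | 0 ≤ p.1 ∧ 0 ≤ p.2}))) :
    ∫ p in S, parityLift ε f p * parityLift ε g p * w (sqMap p)
      = ∫ q in sqMap '' (S ∩ {p | 0 ≤ p.1 ∧ 0 ≤ p.2}), f q * g q * halfWeight w ε q := by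
  have hQ := hS.inter measurableSet_quadrant
  have hQ₀ := Set.inter_subset_right (s := S) (t := {p : ℝ × ℝ | 0 ≤ p.1 ∧ 0 ≤ p.2})
  have heven : ∀ p, parityLift ε f p * parityLift ε g p * w (sqMap p)
      = parityMonomial ε p ^ 2 * (f (sqMap p) * g (sqMap p)) * w (sqMap p) := fun p => by
    simp only [parityLift]; ring
  simp only [heven]
  rw [setIntegral_eq_four_mul_setIntegral_quadrant hS₁ hS₂ ?_ ?_
    ((integrableOn_image_sqMap_mul_halfWeight_iff hQ hQ₀ w ε (fun q => f q * g q)).1 hfg),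
    ← setIntegral_image_sqMap_mul_halfWeight hQ hQ₀ w ε (fun q => f q * g q)]
  all_goals intro p; rcases ε with ⟨_ | _, _ | _⟩ <;> simp [parityMonomial]

theorem setIntegral_comp_sqMap
    (hw : IntegrableOn (halfWeight w (false, false)) (sqMap '' (S ∩ {p | 0 ≤ p.1 ∧ 0 ≤ p.2}))) :
    ∫ p in S, w (sqMap p)
      = ∫ q in sqMap '' (S ∩ {p | 0 ≤ p.1 ∧ 0 ≤ p.2}), halfWeight w (false, false) q := by
  simpa [parityLift, parityMonomial] using
    setIntegral_parityLift_mul_parityLift_self hS₁ hS₂ w hS 1 1 (false, false) (by simpa using hw)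

end Lift

end FullySymmetric

open FullySymmetric

theorem fully_symmetric_orthonormal_basis
    (Ω : Set (ℝ × ℝ)) (hΩmeas : MeasurableSet Ω)
    (hΩsym : ∀ p : ℝ × ℝ, p ∈ Ω →
      (-p.1, p.2) ∈ Ω ∧ (p.1, -p.2) ∈ Ω ∧ (-p.1, -p.2) ∈ Ω)
    (sqΩ : Set (ℝ × ℝ))
    (hsqΩ : sqΩ = (fun p : ℝ × ℝ => (p.1 ^ 2, p.2 ^ 2)) ''
      (Ω ∩ {p : ℝ × ℝ | 0 ≤ p.1 ∧ 0 ≤ p.2}))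
    (w : ℝ × ℝ → ℝ) (hw_meas : Measurable w)
    (hw_nonneg : ∀ p ∈ sqΩ, 0 ≤ w p)
    -- the exponent associated to a sign: `true` codes `1/2`, `false` codes `-1/2`
    (sgn : Bool → ℝ) (hsgn_true : sgn true = (1 : ℝ) / 2)
    (hsgn_false : sgn false = -((1 : ℝ) / 2))
    -- the weights `w_ε` on `√Ω`
    (wε : Bool × Bool → ℝ × ℝ → ℝ)
    (hwε : ∀ ε p, wε ε p = p.1 ^ sgn ε.1 * p.2 ^ sgn ε.2 * w p)
    (hInt : ∀ ε, IntegrableOn (wε ε) sqΩ)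
    (hIntPos : ∀ ε, 0 < ∫ p in sqΩ, wε ε p)
    -- the normalization constants
    (bcoef : Bool × Bool → ℝ)
    (hbcoef : ∀ ε, bcoef ε = (∫ p in sqΩ, wε ε p)⁻¹)
    (W : ℝ × ℝ → ℝ) (hW : ∀ p : ℝ × ℝ, W p = w (p.1 ^ 2, p.2 ^ 2))
    (bW : ℝ) (hbW : bW = (∫ p in Ω, W p)⁻¹)
    -- for each sign pair, a family of measurable functions orthonormal w.r.t. `⟨·,·⟩_ε`
    (A : Bool × Bool → Type*)
    (P : ∀ ε, A ε → ℝ × ℝ → ℝ)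
    (hPmeas : ∀ ε α, Measurable (P ε α))
    (hON : ∀ ε (α α' : A ε),
      bcoef ε * ∫ p in sqΩ, P ε α p * P ε α' p * wε ε p
        = if α = α' then 1 else 0)
    -- the four families of functions on `Ω`
    (Pfull : ∀ ε, A ε → ℝ × ℝ → ℝ)
    (hEE : ∀ (α : A (false, false)) (p : ℝ × ℝ),
      Pfull (false, false) α p = P (false, false) α (p.1 ^ 2, p.2 ^ 2))
    (hOO : ∀ (α : A (true, true)) (p : ℝ × ℝ),
      Pfull (true, true) α p
        = Real.sqrt (bcoef (true, true) / bW) * (p.1 * p.2) *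
            P (true, true) α (p.1 ^ 2, p.2 ^ 2))
    (hEO : ∀ (α : A (false, true)) (p : ℝ × ℝ),
      Pfull (false, true) α p
        = Real.sqrt (bcoef (false, true) / bW) * p.2 *
            P (false, true) α (p.1 ^ 2, p.2 ^ 2))
    (hOE : ∀ (α : A (true, false)) (p : ℝ × ℝ),
      Pfull (true, false) α p
        = Real.sqrt (bcoef (true, false) / bW) * p.1 *
            P (true, false) α (p.1 ^ 2, p.2 ^ 2)) :
    -- the combined family is orthonormal with respect to `⟨·,·⟩_W`
    ∀ x y : Σ ε : Bool × Bool, A ε,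
      bW * ∫ p in Ω, Pfull x.1 x.2 p * Pfull y.1 y.2 p * W p
        = if x = y then 1 else 0 := by
  have hsgn : sgn = halfExp := funext fun b => by cases b <;> simp [halfExp, *]
  subst hsgn
  obtain rfl : wε = halfWeight w := funext₂ hwε
  obtain rfl : W = fun p => w (sqMap p) := funext hW
  obtain rfl : sqΩ = sqMap '' (Ω ∩ {p | 0 ≤ p.1 ∧ 0 ≤ p.2}) := hsqΩ
  have hsym₁ : ∀ p ∈ Ω, (-p.1, p.2) ∈ Ω := fun p hp => (hΩsym p hp).1
  have hsym₂ : ∀ p ∈ Ω, (p.1, -p.2) ∈ Ω := fun p hp => (hΩsym p hp).2.1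
  have hbpos : ∀ ε, 0 < bcoef ε := fun ε => hbcoef ε ▸ inv_pos.2 (hIntPos ε)
  have hbEE : bcoef (false, false) = bW := by
    rw [hbcoef, hbW, setIntegral_comp_sqMap hsym₁ hsym₂ w hΩmeas (hInt _)]
  have hbW₀ : 0 < bW := hbEE ▸ hbpos _
  have hPfull : ∀ ε α, Pfull ε α = fun p => √(bcoef ε / bW) * parityLift ε (P ε α) p := by
    rintro ⟨_ | _, _ | _⟩ α <;> funext p <;>
      simp only [hEE, hEO, hOE, hOO, ← hbEE, div_self (hbpos _).ne', Real.sqrt_one, parityLift,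
        parityMonomial, sqMap, Bool.false_eq_true, ↓reduceIte, mul_one, one_mul] <;> ring
  have hint : ∀ ε (α α' : A ε), IntegrableOn (fun q => P ε α q * P ε α' q * halfWeight w ε q)
      (sqMap '' (Ω ∩ {p | 0 ≤ p.1 ∧ 0 ≤ p.2})) := fun ε α α' => by
    -- `hON ε β β` makes the diagonal integral nonzero, hence not the junk value `0`
    have hdiag : ∀ β, IntegrableOn (fun q => P ε β q * P ε β q * halfWeight w ε q)
        (sqMap '' (Ω ∩ {p | 0 ≤ p.1 ∧ 0 ≤ p.2})) := fun β =>
      Integrable.of_integral_ne_zero fun h => by simpa [h] using hON ε β β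
    exact integrableOn_mul_mul_halfWeight (hΩmeas.inter measurableSet_quadrant)
      Set.inter_subset_right hw_meas hw_nonneg ε (hPmeas ε α) (hPmeas ε α') (hdiag α) (hdiag α')
  rintro ⟨ε, α⟩ ⟨ε', α'⟩
  have hconst : ∫ p in Ω, Pfull ε α p * Pfull ε' α' p * w (sqMap p)
      = √(bcoef ε / bW) * √(bcoef ε' / bW) *
        ∫ p in Ω, parityLift ε (P ε α) p * parityLift ε' (P ε' α') p * w (sqMap p) := by
    rw [← integral_const_mul, hPfull, hPfull]
    congr 1 with p
    ring
  rw [hconst]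
  by_cases h : ε = ε'
  · subst h
    rw [setIntegral_parityLift_mul_parityLift_self hsym₁ hsym₂ w hΩmeas _ _ ε (hint ε α α'),
      Real.mul_self_sqrt (div_nonneg (hbpos ε).le hbW₀.le), ← mul_assoc,
      mul_div_cancel₀ _ hbW₀.ne', hON]
    simp
  · rw [setIntegral_parityLift_mul_parityLift_of_ne hsym₁ hsym₂ w _ _ h, mul_zero, mul_zero,
      if_neg fun hx => h (congrArg Sigma.fst hx)]
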